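/- arXiv:2507.18456 — 2 statements merged into one kernel-verified Lean document; each statement's English description precedes it below -/
import Mathlib

section
/- Let θ be an endomorphism of G with matrix (α, β, γ, δ) such that α and δ are both bijective. Then det_H(θ) is bijective if and only if det_K(θ) is bijective. -/
/-!
Writing `g = inl h * inr k`, the endomorphism `θ` factors in two ways through triangular
self-maps of `H × K`:
`θ g = inl (det_H θ h) * θ (inr (δ⁻¹ (γ h) * k))` and
`θ g = θ (inl (h * α⁻¹ (β k))) * inr (det_K θ k)`.
In each factorization the outer map is triangular with bijective diagonal (`δ`, resp. `α`),
and the inner one is triangular with diagonal `det_H θ`, resp. `det_K θ`, and bijective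
fibres. Hence `θ` is bijective iff `det_H θ` is, and iff `det_K θ` is.
-/

open Function

section Triangular

variable {A A' B B' : Type*}

theorem bijective_prod_shear_left_iff [Nonempty A] [Nonempty B] {p : A → A'} {q : A → B → B'}
    (hq : ∀ a, Bijective (q a)) :
    Bijective (fun x : A × B => (p x.1, q x.1 x.2)) ↔ Bijective p := by
  let shear : A × B ≃ A × B' :=
    Equiv.prodShear (Equiv.refl A) fun a => Equiv.ofBijective (q a) (hq a)
  have hfac : (fun x : A × B => (p x.1, q x.1 x.2)) = Prod.map p id ∘ shear := rfl
  have : Nonempty B' := Nonempty.map (q (Classical.arbitrary A)) ‹_›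
  rw [hfac, Equiv.bijective_comp, Prod.map_bijective]
  exact and_iff_left bijective_id

theorem bijective_prod_shear_right_iff [Nonempty A] [Nonempty B] {p : B → B'} {q : B → A → A'}
    (hq : ∀ b, Bijective (q b)) :
    Bijective (fun x : A × B => (q x.2 x.1, p x.2)) ↔ Bijective p := by
  have hfac : (fun x : A × B => (q x.2 x.1, p x.2)) =
      Prod.swap ∘ (fun y : B × A => (p y.1, q y.1 y.2)) ∘ Prod.swap := rfl
  rw [hfac, Prod.swap_bijective.of_comp_iff', Prod.swap_bijective.of_comp_iff]
  exact bijective_prod_shear_left_iff hq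

end Triangular

namespace SemidirectProduct

variable {H K : Type*} [Group H] [Group K] {f : K →* MulAut H}

def detH (α : H → H) (β : K → H) (γ : H → K) (δi : K → K) (h : H) : H :=
  α h * (β (δi (γ h)))⁻¹

def detK (αi : H → H) (β : K → H) (γ : H → K) (δ : K → K) (k : K) : K :=
  (γ (αi (β k)))⁻¹ * δ k

variable (θ : H ⋊[f] K →* H ⋊[f] K) {α : H → H} {β : K → H} {γ : H → K} {δ : K → K}

theorem bijective_inl_mul_map_inr (hθK : ∀ k, θ (inr k) = ⟨β k, δ k⟩) (hδ : Bijective δ) :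
    Bijective (fun x : H × K => inl x.1 * θ (inr x.2)) := by
  have hpair : (fun x : H × K => inl x.1 * θ (inr x.2)) =
      equivProd.symm ∘ fun x : H × K => (x.1 * β x.2, δ x.2) := by
    funext x
    ext <;> simp [hθK]
  rw [hpair, Equiv.comp_bijective]
  exact (bijective_prod_shear_right_iff fun k => (Equiv.mulRight (β k)).bijective).mpr hδ

theorem bijective_map_inl_mul_inr (hθH : ∀ h, θ (inl h) = ⟨α h, γ h⟩) (hα : Bijective α) :
    Bijective (fun x : H × K => θ (inl x.1) * inr x.2) := by
  have hpair : (fun x : H × K => θ (inl x.1) * inr x.2) =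
      equivProd.symm ∘ fun x : H × K => (α x.1, γ x.1 * x.2) := by
    funext x
    ext <;> simp [hθH]
  rw [hpair, Equiv.comp_bijective]
  exact (bijective_prod_shear_left_iff fun h => (Equiv.mulLeft (γ h)).bijective).mpr hα

theorem map_inl_eq_inl_detH_mul_map_inr (hθH : ∀ h, θ (inl h) = ⟨α h, γ h⟩)
    (hθK : ∀ k, θ (inr k) = ⟨β k, δ k⟩) {δi : K → K} (hδi' : RightInverse δi δ) (h : H) :
    θ (inl h) = inl (detH α β γ δi h) * θ (inr (δi (γ h))) := by
  rw [hθH, hθK, hδi']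
  ext <;> simp [detH]

theorem map_inr_eq_map_inl_mul_inr_detK (hθH : ∀ h, θ (inl h) = ⟨α h, γ h⟩)
    (hθK : ∀ k, θ (inr k) = ⟨β k, δ k⟩) {αi : H → H} (hαi' : RightInverse αi α) (k : K) :
    θ (inr k) = θ (inl (αi (β k))) * inr (detK αi β γ δ k) := by
  rw [hθH, hθK, hαi']
  ext <;> simp [detK]

theorem map_eq_inl_detH_mul_map_inr (hθH : ∀ h, θ (inl h) = ⟨α h, γ h⟩)
    (hθK : ∀ k, θ (inr k) = ⟨β k, δ k⟩) {δi : K → K} (hδi' : RightInverse δi δ)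
    (g : H ⋊[f] K) :
    θ g = inl (detH α β γ δi g.left) * θ (inr (δi (γ g.left) * g.right)) := by
  conv_lhs => rw [← inl_left_mul_inr_right g, map_mul,
    map_inl_eq_inl_detH_mul_map_inr θ hθH hθK hδi']
  rw [mul_assoc, ← map_mul, ← map_mul]

theorem map_eq_map_inl_mul_inr_detK (hθH : ∀ h, θ (inl h) = ⟨α h, γ h⟩)
    (hθK : ∀ k, θ (inr k) = ⟨β k, δ k⟩) {αi : H → H} (hαi' : RightInverse αi α)
    (g : H ⋊[f] K) :
    θ g = θ (inl (g.left * αi (β g.right))) * inr (detK αi β γ δ g.right) := by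
  conv_lhs => rw [← inl_left_mul_inr_right g, map_mul,
    map_inr_eq_map_inl_mul_inr_detK θ hθH hθK hαi']
  rw [← mul_assoc, ← map_mul, ← map_mul]

theorem bijective_iff_bijective_detH (hθH : ∀ h, θ (inl h) = ⟨α h, γ h⟩)
    (hθK : ∀ k, θ (inr k) = ⟨β k, δ k⟩) {δi : K → K} (hδi : LeftInverse δi δ)
    (hδi' : RightInverse δi δ) :
    Bijective θ ↔ Bijective (detH α β γ δi) := by
  have hfac : θ ∘ equivProd.symm = (fun x : H × K => inl x.1 * θ (inr x.2)) ∘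
      fun x => (detH α β γ δi x.1, δi (γ x.1) * x.2) :=
    funext fun x => map_eq_inl_detH_mul_map_inr θ hθH hθK hδi' (equivProd.symm x)
  rw [← equivProd.symm.bijective_comp, hfac,
    (bijective_inl_mul_map_inr θ hθK ⟨hδi.injective, hδi'.surjective⟩).of_comp_iff']
  exact bijective_prod_shear_left_iff fun h => (Equiv.mulLeft (δi (γ h))).bijective

theorem bijective_iff_bijective_detK (hθH : ∀ h, θ (inl h) = ⟨α h, γ h⟩)
    (hθK : ∀ k, θ (inr k) = ⟨β k, δ k⟩) {αi : H → H} (hαi : LeftInverse αi α)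
    (hαi' : RightInverse αi α) :
    Bijective θ ↔ Bijective (detK αi β γ δ) := by
  have hfac : θ ∘ equivProd.symm = (fun x : H × K => θ (inl x.1) * inr x.2) ∘
      fun x => (x.1 * αi (β x.2), detK αi β γ δ x.2) :=
    funext fun x => map_eq_map_inl_mul_inr_detK θ hθH hθK hαi' (equivProd.symm x)
  rw [← equivProd.symm.bijective_comp, hfac,
    (bijective_map_inl_mul_inr θ hθH ⟨hαi.injective, hαi'.surjective⟩).of_comp_iff']
  exact bijective_prod_shear_right_iff fun k => (Equiv.mulRight (αi (β k))).bijective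

end SemidirectProduct

/-- Let `θ` be an endomorphism of `G = H ⋊[f] K` with matrix
`(α, β, γ, δ)` such that `α` and `δ` are bijective (with two-sided inverses `αi`
and `δi`).  Then `det_H θ : h ↦ α h * (β (δi (γ h)))⁻¹` is bijective if and only if
`det_K θ : k ↦ (γ (αi (β k)))⁻¹ * δ k` is bijective. -/
theorem detH_bijective_iff_detK_bijective
    {H K : Type*} [Group H] [Group K] (f : K →* MulAut H)
    (θ : (H ⋊[f] K) →* (H ⋊[f] K))
    (α : H → H) (β : K → H) (γ : H → K) (δ : K → K)
    (hθH : ∀ h : H, θ ⟨h, 1⟩ = ⟨α h, γ h⟩)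
    (hθK : ∀ k : K, θ ⟨1, k⟩ = ⟨β k, δ k⟩)
    (αi : H → H)
    (hαi : Function.LeftInverse αi α) (hαi' : Function.RightInverse αi α)
    (δi : K → K)
    (hδi : Function.LeftInverse δi δ) (hδi' : Function.RightInverse δi δ) :
    Function.Bijective (fun h : H => α h * (β (δi (γ h)))⁻¹) ↔
      Function.Bijective (fun k : K => (γ (αi (β k)))⁻¹ * δ k) := by
  exact (SemidirectProduct.bijective_iff_bijective_detH θ hθH hθK hδi hδi').symm.trans
    (SemidirectProduct.bijective_iff_bijective_detK θ hθH hθK hαi hαi')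
end

section
/- Let θ be an endomorphism of G with matrix (α, β, γ, δ) such that α and δ are bijective and Δ_K := det_K(θ) is bijective (so that Δ_H := det_H(θ) is also bijective). Then the inverse of Δ_H is given by Δ_H⁻¹(h) = α⁻¹(h) · (α⁻¹(β(Δ_K⁻¹((γ(α⁻¹(h)))⁻¹))))⁻¹ for all h ∈ H. -/
/-!
Since `⟨x, k⟩ = ⟨x, 1⟩ * ⟨1, k⟩`, the matrix of `θ` gives `θ ⟨x, s⁻¹⟩ = ⟨Δ_H x, 1⟩` for
`s = δ⁻¹ (γ x)`, and `θ ⟨a * b⁻¹, k⟩ = ⟨α a, γ a * Δ_K k⟩` for `b = α⁻¹ (β k)`. The second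
identity shows that `θ` is injective, and that the proposed inverse `g` satisfies
`θ ⟨g y, t⟩ = ⟨y, 1⟩` with `t = Δ_K⁻¹ (γ (α⁻¹ y))⁻¹`. Comparing the two identities, injectivity of
`θ` gives `g ∘ Δ_H = id`, and injectivity of `δ` (on the `K`-component) gives `Δ_H ∘ g = id`.
-/

namespace SemidirectProduct

variable {N G : Type*} [Group N] [Group G] {φ : G →* MulAut N}

theorem mk_mul_mk_inv_same_right (a b : N) (g : G) :
    (⟨a, g⟩ : N ⋊[φ] G) * ⟨b, g⟩⁻¹ = ⟨a * b⁻¹, 1⟩ := by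
  ext <;> simp

theorem mk_inv_mul_mk_same_left (n : N) (g g' : G) :
    (⟨n, g⟩ : N ⋊[φ] G)⁻¹ * ⟨n, g'⟩ = ⟨1, g⁻¹ * g'⟩ := by
  ext <;> simp

open Function

variable {H K : Type*} [Group H] [Group K] {f : K →* MulAut H} {θ : H ⋊[f] K →* H ⋊[f] K}
  {α : H → H} {β : K → H} {γ : H → K} {δ : K → K}

theorem right_map_mk (hθH : ∀ h, θ ⟨h, 1⟩ = ⟨α h, γ h⟩) (hθK : ∀ k, θ ⟨1, k⟩ = ⟨β k, δ k⟩)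
    (x : H) (k : K) : (θ ⟨x, k⟩).right = γ x * δ k := by
  have : (⟨x, k⟩ : H ⋊[f] K) = ⟨x, 1⟩ * ⟨1, k⟩ := by ext <;> simp
  rw [this, map_mul, hθH, hθK, mul_right]

theorem map_mk_inv_eq_mk_one (hθH : ∀ h, θ ⟨h, 1⟩ = ⟨α h, γ h⟩)
    (hθK : ∀ k, θ ⟨1, k⟩ = ⟨β k, δ k⟩) {x : H} {s : K} (hs : δ s = γ x) :
    θ ⟨x, s⁻¹⟩ = ⟨α x * (β s)⁻¹, 1⟩ := by
  have : (⟨x, s⁻¹⟩ : H ⋊[f] K) = ⟨x, 1⟩ * (⟨1, s⟩)⁻¹ := by ext <;> simp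
  rw [this, map_mul, map_inv, hθH, hθK, hs, mk_mul_mk_inv_same_right]

theorem map_mk_mul_inv (hθH : ∀ h, θ ⟨h, 1⟩ = ⟨α h, γ h⟩) (hθK : ∀ k, θ ⟨1, k⟩ = ⟨β k, δ k⟩)
    (a : H) {b : H} {k : K} (hb : α b = β k) :
    θ ⟨a * b⁻¹, k⟩ = ⟨α a, γ a * ((γ b)⁻¹ * δ k)⟩ := by
  have : (⟨a * b⁻¹, k⟩ : H ⋊[f] K) = ⟨a, 1⟩ * ((⟨b, 1⟩)⁻¹ * ⟨1, k⟩) := by ext <;> simp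
  rw [this, map_mul, map_mul, map_inv, hθH, hθH, hθK, ← hb, mk_inv_mul_mk_same_left]
  ext <;> simp

theorem injective_of_injective_detK (hθH : ∀ h, θ ⟨h, 1⟩ = ⟨α h, γ h⟩)
    (hθK : ∀ k, θ ⟨1, k⟩ = ⟨β k, δ k⟩) {αi : H → H} (hαi : LeftInverse αi α)
    (hαi' : RightInverse αi α) (hΔK : Injective fun k => (γ (αi (β k)))⁻¹ * δ k) :
    Injective θ := by
  have hθ (p : H ⋊[f] K) : θ p = ⟨α (p.left * αi (β p.right)),
      γ (p.left * αi (β p.right)) * ((γ (αi (β p.right)))⁻¹ * δ p.right)⟩ := by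
    rw [← map_mk_mul_inv hθH hθK _ (hαi' _), mul_inv_cancel_right]
  intro p q hpq
  rw [hθ, hθ, SemidirectProduct.ext_iff] at hpq
  obtain ⟨hleft, hright⟩ := hpq
  dsimp only at hleft hright
  have ha := hαi.injective hleft
  rw [ha, mul_right_inj] at hright
  have hk := hΔK hright
  rw [hk, mul_left_inj] at ha
  exact SemidirectProduct.ext ha hk

theorem left_eq_of_map_mk_eq_mk_one (hθH : ∀ h, θ ⟨h, 1⟩ = ⟨α h, γ h⟩)
    (hθK : ∀ k, θ ⟨1, k⟩ = ⟨β k, δ k⟩) (hδ : Injective δ) {x y y' : H} {k k' : K}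
    (h : θ ⟨x, k⟩ = ⟨y, 1⟩) (h' : θ ⟨x, k'⟩ = ⟨y', 1⟩) : y = y' := by
  have hk : k = k' := hδ <| mul_left_cancel (a := γ x) <| by
    rw [← right_map_mk hθH hθK, ← right_map_mk hθH hθK, h, h']
  subst hk
  exact congrArg left (h.symm.trans h')

end SemidirectProduct

open SemidirectProduct Function

/-- Let `θ` be an endomorphism of `G = H ⋊[f] K` with matrix
`(α, β, γ, δ)` such that `α` and `δ` are bijective (with two-sided inverses `αi`,
`δi`) and `Δ_K := det_K θ : k ↦ (γ (αi (β k)))⁻¹ * δ k` is bijective (with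
two-sided inverse `ΔKi`), so that `Δ_H := det_H θ : h ↦ α h * (β (δi (γ h)))⁻¹`
is also bijective.  Then `Δ_H⁻¹ h = αi h * (αi (β (ΔKi ((γ (αi h))⁻¹))))⁻¹`. -/
theorem detH_inverse_formula
    {H K : Type*} [Group H] [Group K] (f : K →* MulAut H)
    (θ : (H ⋊[f] K) →* (H ⋊[f] K))
    (α : H → H) (β : K → H) (γ : H → K) (δ : K → K)
    (hθH : ∀ h : H, θ ⟨h, 1⟩ = ⟨α h, γ h⟩)
    (hθK : ∀ k : K, θ ⟨1, k⟩ = ⟨β k, δ k⟩)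
    (αi : H → H)
    (hαi : Function.LeftInverse αi α) (hαi' : Function.RightInverse αi α)
    (δi : K → K)
    (hδi : Function.LeftInverse δi δ) (hδi' : Function.RightInverse δi δ)
    (ΔKi : K → K)
    (hΔKi : Function.LeftInverse ΔKi (fun k : K => (γ (αi (β k)))⁻¹ * δ k))
    (hΔKi' : Function.RightInverse ΔKi (fun k : K => (γ (αi (β k)))⁻¹ * δ k)) :
    Function.Bijective (fun h : H => α h * (β (δi (γ h)))⁻¹) ∧
    (∀ h : H, Function.invFun (fun h : H => α h * (β (δi (γ h)))⁻¹) h =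
      αi h * (αi (β (ΔKi ((γ (αi h))⁻¹))))⁻¹) := by
  set ΔH := fun h : H => α h * (β (δi (γ h)))⁻¹
  set g := fun h : H => αi h * (αi (β (ΔKi ((γ (αi h))⁻¹))))⁻¹
  have hθ := injective_of_injective_detK hθH hθK hαi hαi' hΔKi.injective
  have hΔH (x : H) : θ ⟨x, (δi (γ x))⁻¹⟩ = ⟨ΔH x, 1⟩ := map_mk_inv_eq_mk_one hθH hθK (hδi' _)
  have hΔK (k : K) : (γ (αi (β (ΔKi k))))⁻¹ * δ (ΔKi k) = k := hΔKi' k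
  have hg (y : H) : θ ⟨g y, ΔKi ((γ (αi y))⁻¹)⟩ = ⟨y, 1⟩ := by
    rw [map_mk_mul_inv hθH hθK _ (hαi' _), hαi' y, hΔK, mul_inv_cancel]
  have hleft : LeftInverse g ΔH := fun x =>
    (congrArg left (hθ ((hΔH x).trans (hg (ΔH x)).symm))).symm
  have hright : RightInverse g ΔH := fun y =>
    left_eq_of_map_mk_eq_mk_one hθH hθK hδi.injective (hΔH (g y)) (hg y)
  have hbij : Bijective ΔH := ⟨hleft.injective, hright.surjective⟩
  exact ⟨hbij, congrFun ((leftInverse_invFun hbij.injective).eq_rightInverse hright)⟩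
end
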